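/- arXiv:2304.00321 — 7 statements merged into one kernel-verified Lean document; each statement's English description precedes it below -/
import Mathlib

section
/- For every integer m, the integer M·A² equals 2^18·m, where M = ∏_{x,y,z∈{−1,1}} F(x,y,z), A = U² + V², F(x,y,z) = f(z) + g(z)x + h(z)y + t(z)xy with f(z)=1+z+z², g(z)=1−z²−z³, h(z)=−z³, t(z)=−(z+z²−z³), each modified by subtracting m·(z+1)(z²+1)(1+x)(1+y) from F, and U, V are defined from the resulting f, g, h, t by U = f(i)f(−i) − g(i)g(−i) − h(i)h(−i) + t(i)t(−i) and V = f(i)h(−i) + f(−i)h(i) − g(i)t(−i) − g(−i)t(i). -/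
open Complex

theorem stmt_2 (m : ℤ) (U V : ℤ) (F : ℤ → ℤ → ℤ → ℤ) (f g h t : ℂ → ℂ)
    (hF : ∀ x y z, F x y z = (1+z+z^2) + (1-z^2-z^3)*x + (-z^3)*y + (-(z+z^2-z^3))*(x*y)
            - m*(z+1)*(z^2+1)*(1+x)*(1+y))
    (hf : ∀ z, f z = (1+z+z^2) - (m:ℂ)*(z+1)*(z^2+1))
    (hg : ∀ z, g z = (1-z^2-z^3) - (m:ℂ)*(z+1)*(z^2+1))
    (hh : ∀ z, h z = (-z^3) - (m:ℂ)*(z+1)*(z^2+1))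
    (ht : ∀ z, t z = (-(z+z^2-z^3)) - (m:ℂ)*(z+1)*(z^2+1))
    (hU : (U:ℂ) = f I * f (-I) - g I * g (-I) - h I * h (-I) + t I * t (-I))
    (hV : (V:ℂ) = f I * h (-I) + f (-I) * h I - g I * t (-I) - g (-I) * t I) :
    (∏ x ∈ ({-1,1} : Finset ℤ), ∏ y ∈ ({-1,1} : Finset ℤ), ∏ z ∈ ({-1,1} : Finset ℤ),
        F x y z) * (U^2 + V^2)^2 = 2^18 * m := by
  have hI2 : (I:ℂ)^2 = -1 := Complex.I_sq
  have hU0 : U = 0 := by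
    have h1 : (U:ℂ) = 0 := by
      rw [hU, hf, hf, hg, hg, hh, hh, ht, ht]
      ring_nf
      rw [show (I:ℂ)^4 = 1 from by rw [show (4:ℕ)=2*2 from rfl, pow_mul, Complex.I_sq]; ring,
         show (I:ℂ)^6 = -1 from by rw [show (6:ℕ)=2*3 from rfl, pow_mul, Complex.I_sq]; ring]
      rw [Complex.I_sq]; ring
    exact_mod_cast h1
  have hV2 : V = 2 := by
    have h1 : (V:ℂ) = 2 := by
      rw [hV, hf, hf, hg, hg, hh, hh, ht, ht]
      ring_nf
      rw [show (I:ℂ)^4 = 1 from by rw [show (4:ℕ)=2*2 from rfl, pow_mul, Complex.I_sq]; ring,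
         show (I:ℂ)^6 = -1 from by rw [show (6:ℕ)=2*3 from rfl, pow_mul, Complex.I_sq]; ring]
      rw [Complex.I_sq]; ring
    exact_mod_cast h1
  subst hU0 hV2
  simp only [Finset.prod_insert, Finset.mem_singleton, Finset.prod_singleton, hF]
  norm_num
  ring
end

section
/- For every integer m, with F(x,y,z) = (1+z)(1+z²) + (1+z²−z³)x + (1+z)y + xy + m(z+1)(z²+1)(1+x)(1+y), the quantity M·A² equals 2^17·(1+2m), where M = ∏_{x,y,z∈{−1,1}} F(x,y,z), A = U² + V², and U, V are built from the four coefficient polynomials f(z)=(1+z)(1+z²)+m(z+1)(z²+1), g(z)=(1+z²−z³)+m(z+1)(z²+1), h(z)=(1+z)+m(z+1)(z²+1), t(z)=1+m(z+1)(z²+1) via U = f(i)f(−i) − g(i)g(−i) − h(i)h(−i) + t(i)t(−i), V = f(i)h(−i) + f(−i)h(i) − g(i)t(−i) − g(−i)t(i). -/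
open Complex

theorem stmt_3 (m : ℤ) (U V : ℤ) (F : ℤ → ℤ → ℤ → ℤ) (f g h t : ℂ → ℂ)
    (hF : ∀ x y z, F x y z = (1+z)*(1+z^2) + (1+z^2-z^3)*x + (1+z)*y + x*y
            + m*(z+1)*(z^2+1)*(1+x)*(1+y))
    (hf : ∀ z, f z = (1+z)*(1+z^2) + (m:ℂ)*(z+1)*(z^2+1))
    (hg : ∀ z, g z = (1+z^2-z^3) + (m:ℂ)*(z+1)*(z^2+1))
    (hh : ∀ z, h z = (1+z) + (m:ℂ)*(z+1)*(z^2+1))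
    (ht : ∀ z, t z = 1 + (m:ℂ)*(z+1)*(z^2+1))
    (hU : (U:ℂ) = f I * f (-I) - g I * g (-I) - h I * h (-I) + t I * t (-I))
    (hV : (V:ℂ) = f I * h (-I) + f (-I) * h I - g I * t (-I) - g (-I) * t I) :
    (∏ x ∈ ({-1,1} : Finset ℤ), ∏ y ∈ ({-1,1} : Finset ℤ), ∏ z ∈ ({-1,1} : Finset ℤ),
        F x y z) * (U^2 + V^2)^2 = 2^17 * (1 + 2*m) := by
  have hI : I^2 = -1 := Complex.I_sq
  have h6 : I^6 = -1 := by rw [show (6:ℕ) = 2*3 by rfl, pow_mul, hI]; ring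
  have hU' : U = -2 := by
    have : (U:ℂ) = ((-2 : ℤ) : ℂ) := by
      rw [hU, hf, hf, hg, hg, hh, hh, ht, ht]
      push_cast
      ring_nf
      simp [Complex.I_sq, h6]
    exact_mod_cast this
  have hV' : V = 0 := by
    have : (V:ℂ) = ((0 : ℤ) : ℂ) := by
      rw [hV, hf, hf, hg, hg, hh, hh, ht, ht]
      push_cast
      ring_nf
      simp [Complex.I_sq, h6]
      ring
    exact_mod_cast this
  subst hU' hV'
  simp only [Finset.prod_insert, Finset.mem_singleton, Finset.prod_singleton, hF]
  norm_num
  ring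
end

section
/- For all integers m, k, set W1=(z+1)(z²+1)(1+x)(1+y), W2=(z+1)(z²+1)(1+x)(1−y), and F(x,y,z)=(1+z)+(1+z−z³)x+(1−z²)y−(1−z)(1−z²)xy+m·W1+k·W2. Then M·A² = (3+16m)(3+16k), where M = ∏_{x,y,z∈{−1,1}} F(x,y,z), A = U²+V², and U, V are defined from the coefficient polynomials f(z)=(1+z)+(m+k)(z+1)(z²+1), g(z)=(1+z−z³)+(m+k)(z+1)(z²+1), h(z)=(1−z²)+(m−k)(z+1)(z²+1), t(z)=−(1−z)(1−z²)+(m−k)(z+1)(z²+1) by U = f(i)f(−i)−g(i)g(−i)−h(i)h(−i)+t(i)t(−i) and V = f(i)h(−i)+f(−i)h(i)−g(i)t(−i)−g(−i)t(i). -/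
open Complex

theorem stmt_5 (m k : ℤ) (U V : ℤ) (F : ℤ → ℤ → ℤ → ℤ) (f g h t : ℂ → ℂ)
    (hF : ∀ x y z, F x y z = (1+z) + (1+z-z^3)*x + (1-z^2)*y - (1-z)*(1-z^2)*(x*y)
            + m*((z+1)*(z^2+1)*(1+x)*(1+y)) + k*((z+1)*(z^2+1)*(1+x)*(1-y)))
    (hf : ∀ z, f z = (1+z) + ((m:ℂ)+k)*(z+1)*(z^2+1))
    (hg : ∀ z, g z = (1+z-z^3) + ((m:ℂ)+k)*(z+1)*(z^2+1))
    (hh : ∀ z, h z = (1-z^2) + ((m:ℂ)-k)*(z+1)*(z^2+1))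
    (ht : ∀ z, t z = -((1-z)*(1-z^2)) + ((m:ℂ)-k)*(z+1)*(z^2+1))
    (hU : (U:ℂ) = f I * f (-I) - g I * g (-I) - h I * h (-I) + t I * t (-I))
    (hV : (V:ℂ) = f I * h (-I) + f (-I) * h I - g I * t (-I) - g (-I) * t I) :
    (∏ x ∈ ({-1,1} : Finset ℤ), ∏ y ∈ ({-1,1} : Finset ℤ), ∏ z ∈ ({-1,1} : Finset ℤ),
        F x y z) * (U^2 + V^2)^2 = (3 + 16*m) * (3 + 16*k) := by
  have hU1 : U = 1 := by
    have h1 : (U:ℂ) = 1 := by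
      rw [hU, hf, hf, hg, hg, hh, hh, ht, ht]
      ring_nf
      have h6 : (I:ℂ)^6 = -1 := by
        rw [(by norm_num : (6:ℕ) = 2*3), pow_mul, Complex.I_sq]; ring
      simp [pow_succ, Complex.I_sq, h6]
      try ring
    exact_mod_cast h1
  have hV1 : V = 0 := by
    have h1 : (V:ℂ) = 0 := by
      rw [hV, hf, hf, hg, hg, hh, hh, ht, ht]
      ring_nf
      have h6 : (I:ℂ)^6 = -1 := by
        rw [(by norm_num : (6:ℕ) = 2*3), pow_mul, Complex.I_sq]; ring
      simp [pow_succ, Complex.I_sq, h6]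
      try ring
    exact_mod_cast h1
  subst hU1 hV1
  simp only [Finset.prod_insert, Finset.mem_singleton, Finset.prod_singleton, hF]
  norm_num
  ring
end

section
/- For every integer m, with F(x,y,z) = 1 + m(z+1)(z²+1)(1+x)(1+y), the product M = ∏_{x,y,z∈{−1,1}} F(x,y,z) equals 1+16m times 1 (i.e. M·A² = 1+16m, where A = U²+V² = 1 computed from f(z)=1+m(z+1)(z²+1), g(z)=h(z)=t(z)=m(z+1)(z²+1)). -/
open Complex

theorem stmt_6 (m : ℤ) (U V : ℤ) (F : ℤ → ℤ → ℤ → ℤ) (f g h t : ℂ → ℂ)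
    (hF : ∀ x y z, F x y z = 1 + m*(z+1)*(z^2+1)*(1+x)*(1+y))
    (hf : ∀ z, f z = 1 + (m:ℂ)*(z+1)*(z^2+1))
    (hg : ∀ z, g z = (m:ℂ)*(z+1)*(z^2+1))
    (hh : ∀ z, h z = (m:ℂ)*(z+1)*(z^2+1))
    (ht : ∀ z, t z = (m:ℂ)*(z+1)*(z^2+1))
    (hU : (U:ℂ) = f I * f (-I) - g I * g (-I) - h I * h (-I) + t I * t (-I))
    (hV : (V:ℂ) = f I * h (-I) + f (-I) * h I - g I * t (-I) - g (-I) * t I) :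
    U^2 + V^2 = 1 ∧
    (∏ x ∈ ({-1,1} : Finset ℤ), ∏ y ∈ ({-1,1} : Finset ℤ), ∏ z ∈ ({-1,1} : Finset ℤ),
        F x y z) * (U^2 + V^2)^2 = 1 + 16*m := by
  have hI : (I:ℂ)^2 + 1 = 0 := by rw [I_sq]; ring
  have hI' : ((-I):ℂ)^2 + 1 = 0 := by rw [neg_pow, I_sq]; ring
  have hU1 : U = 1 := by
    have : (U:ℂ) = 1 := by
      rw [hU, hf, hf, hg, hg, hh, hh, ht, ht, hI]
      rw [show ((-I):ℂ)^2 + 1 = 0 from hI']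
      ring
    exact_mod_cast this
  have hV0 : V = 0 := by
    have : (V:ℂ) = 0 := by
      rw [hV, hf, hf, hg, hg, hh, hh, ht, ht, hI]
      rw [show ((-I):ℂ)^2 + 1 = 0 from hI']
      ring
    exact_mod_cast this
  subst hU1 hV0
  refine ⟨by ring, ?_⟩
  simp only [Finset.prod_pair (by norm_num : (-1:ℤ) ≠ 1), hF]
  ring
end

section
/- Let α1, α2, β1, β2, γ1, γ2, δ1, δ2 be integers such that 2(α1+α2+γ1+γ2)²+2(β1+β2+δ1+δ2)² ≡ 8 (mod 32), 2(α1+α2−γ1−γ2)²+2(β1+β2−δ1−δ2)² ≡ 8 (mod 32), 2(α1−α2+γ1−γ2)²+2(β1−β2+δ1−δ2)² ≡ 8 (mod 32), and 2(α1−α2−γ1+γ2)²+2(β1−β2−δ1+δ2)² ≡ 8 (mod 32). Then α1²+α2²+β1²+β2²+γ1²+γ2²+δ1²+δ2² ≡ 0 (mod 4). -/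
theorem stmt_7 (α1 α2 β1 β2 γ1 γ2 δ1 δ2 : ℤ)
    (h1 : 2*(α1+α2+γ1+γ2)^2 + 2*(β1+β2+δ1+δ2)^2 ≡ 8 [ZMOD 32])
    (h2 : 2*(α1+α2-γ1-γ2)^2 + 2*(β1+β2-δ1-δ2)^2 ≡ 8 [ZMOD 32])
    (h3 : 2*(α1-α2+γ1-γ2)^2 + 2*(β1-β2+δ1-δ2)^2 ≡ 8 [ZMOD 32])
    (h4 : 2*(α1-α2-γ1+γ2)^2 + 2*(β1-β2-δ1+δ2)^2 ≡ 8 [ZMOD 32]) :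
    α1^2+α2^2+β1^2+β2^2+γ1^2+γ2^2+δ1^2+δ2^2 ≡ 0 [ZMOD 4] := by
  have hsum := ((h1.add h2).add h3).add h4
  have key : 8 * (α1^2+α2^2+β1^2+β2^2+γ1^2+γ2^2+δ1^2+δ2^2) ≡ 32 [ZMOD 32] := by
    calc 8 * (α1^2+α2^2+β1^2+β2^2+γ1^2+γ2^2+δ1^2+δ2^2)
        = 2*(α1+α2+γ1+γ2)^2 + 2*(β1+β2+δ1+δ2)^2
          + (2*(α1+α2-γ1-γ2)^2 + 2*(β1+β2-δ1-δ2)^2)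
          + (2*(α1-α2+γ1-γ2)^2 + 2*(β1-β2+δ1-δ2)^2)
          + (2*(α1-α2-γ1+γ2)^2 + 2*(β1-β2-δ1+δ2)^2) := by ring
      _ ≡ 8 + 8 + 8 + 8 [ZMOD 32] := hsum
  have hdvd : (32 : ℤ) ∣ 8 * (α1^2+α2^2+β1^2+β2^2+γ1^2+γ2^2+δ1^2+δ2^2) - 32 :=
    Int.ModEq.dvd key.symm
  have : (4 : ℤ) ∣ (α1^2+α2^2+β1^2+β2^2+γ1^2+γ2^2+δ1^2+δ2^2) := by omega
  exact Int.modEq_zero_iff_dvd.mpr this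
end

section
/- An integer n with n ≡ 9 (mod 16) can be written as (3+16k)(3+16m) for some integers k, m or as (5+16k)(5+16m) for some integers k, m if and only if n has at least one prime factor p with p ≡ ±3 or ±5 modulo 16. -/
private lemma key_prime_factor : ∀ b : ℕ,
    (b % 16 = 3 ∨ b % 16 = 5 ∨ b % 16 = 11 ∨ b % 16 = 13) →
    ∃ p : ℕ, p.Prime ∧ p ∣ b ∧
      (p % 16 = 3 ∨ p % 16 = 5 ∨ p % 16 = 11 ∨ p % 16 = 13) := by
  intro b
  induction b using Nat.strong_induction_on with
  | _ b ih =>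
    intro hb
    have hb2 : 2 ≤ b := by omega
    have hpp : b.minFac.Prime := Nat.minFac_prime (by omega)
    have hpd : b.minFac ∣ b := Nat.minFac_dvd b
    by_cases hS : b.minFac % 16 = 3 ∨ b.minFac % 16 = 5 ∨ b.minFac % 16 = 11 ∨
        b.minFac % 16 = 13
    · exact ⟨b.minFac, hpp, hpd, hS⟩
    · obtain ⟨c, hc⟩ := hpd
      have hbodd : b % 2 = 1 := by omega
      have hp2 : b.minFac ≠ 2 := by
        intro h2
        have hd := Nat.minFac_dvd b
        rw [h2] at hd
        omega
      have hpodd : b.minFac % 2 = 1 := Nat.odd_iff.mp (hpp.odd_of_ne_two hp2)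
      have hple : 2 ≤ b.minFac := hpp.two_le
      have hclt : c < b := by
        rcases Nat.lt_or_ge c b with h | h
        · exact h
        · nlinarith
      have hcne : 0 < c := by
        rcases Nat.eq_zero_or_pos c with h | h
        · subst h; simp at hc; omega
        · exact h
      have hmul : (b.minFac % 16 * (c % 16)) % 16 = b % 16 := by
        conv_rhs => rw [hc, Nat.mul_mod]
      have hq16 : b.minFac % 16 < 16 := Nat.mod_lt _ (by norm_num)
      have hr16 : c % 16 < 16 := Nat.mod_lt _ (by norm_num)
      have hqodd : b.minFac % 16 % 2 = 1 := by omega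
      have hcS : c % 16 = 3 ∨ c % 16 = 5 ∨ c % 16 = 11 ∨ c % 16 = 13 := by
        generalize hq : b.minFac % 16 = q at hmul hS hq16 hqodd
        generalize hr : c % 16 = r at hmul hr16 ⊢
        interval_cases q <;> interval_cases r <;> omega
      obtain ⟨p, hp1, hp2', hp3⟩ := ih c hclt hcS
      exact ⟨p, hp1, hc ▸ hp2'.mul_left _, hp3⟩

theorem stmt_11 (n : ℤ) (hn : n % 16 = 9) :
    ((∃ k m : ℤ, n = (3 + 16*k) * (3 + 16*m)) ∨ (∃ k m : ℤ, n = (5 + 16*k) * (5 + 16*m)))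
      ↔ ∃ p : ℕ, p.Prime ∧ (p:ℤ) ∣ n ∧
          (p % 16 = 3 ∨ p % 16 = 5 ∨ p % 16 = 11 ∨ p % 16 = 13) := by
  constructor
  · rintro (⟨k, m, rfl⟩ | ⟨k, m, rfl⟩)
    · -- factor a = 3 + 16k
      set a : ℤ := 3 + 16*k with ha
      have hb : a.natAbs % 16 = 3 ∨ a.natAbs % 16 = 5 ∨ a.natAbs % 16 = 11 ∨
          a.natAbs % 16 = 13 := by
        have := Int.natAbs_eq a
        omega
      obtain ⟨p, hp1, hp2, hp3⟩ := key_prime_factor a.natAbs hb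
      refine ⟨p, hp1, ?_, hp3⟩
      have h1 : (p:ℤ) ∣ a := by
        have : (p:ℤ) ∣ (a.natAbs : ℤ) := Int.natCast_dvd_natCast.mpr hp2
        exact this.trans (Int.natAbs_dvd.mpr dvd_rfl)
      exact h1.trans ⟨3 + 16*m, rfl⟩
    · set a : ℤ := 5 + 16*k with ha
      have hb : a.natAbs % 16 = 3 ∨ a.natAbs % 16 = 5 ∨ a.natAbs % 16 = 11 ∨
          a.natAbs % 16 = 13 := by
        have := Int.natAbs_eq a
        omega
      obtain ⟨p, hp1, hp2, hp3⟩ := key_prime_factor a.natAbs hb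
      refine ⟨p, hp1, ?_, hp3⟩
      have h1 : (p:ℤ) ∣ a := by
        have : (p:ℤ) ∣ (a.natAbs : ℤ) := Int.natCast_dvd_natCast.mpr hp2
        exact this.trans (Int.natAbs_dvd.mpr dvd_rfl)
      exact h1.trans ⟨5 + 16*m, rfl⟩
  · rintro ⟨p, hp, ⟨q, hq⟩, hres⟩
    have hpm : ((p:ℤ) % 16) = (p % 16 : ℕ) := by
      push_cast
      rfl
    have hmul : ((p:ℤ) % 16 * (q % 16)) % 16 = 9 := by
      rw [← Int.mul_emod, ← hq, hn]
    have hq16 : q % 16 < 16 := Int.emod_lt_of_pos q (by norm_num)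
    have hq0 : 0 ≤ q % 16 := Int.emod_nonneg q (by norm_num)
    rcases hres with h | h | h | h
    · -- p ≡ 3, q ≡ 3
      have hp3 : (p:ℤ) % 16 = 3 := by omega
      have hq3 : q % 16 = 3 := by rw [hp3] at hmul; omega
      exact Or.inl ⟨((p:ℤ) - 3)/16, (q - 3)/16, by rw [hq]; congr 1 <;> omega⟩
    · have hp5 : (p:ℤ) % 16 = 5 := by omega
      have hq5 : q % 16 = 5 := by rw [hp5] at hmul; omega
      exact Or.inr ⟨((p:ℤ) - 5)/16, (q - 5)/16, by rw [hq]; congr 1 <;> omega⟩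
    · -- p ≡ 11 ≡ -5, q ≡ 11; n = (-p)(-q), both ≡ 5
      have hp11 : (p:ℤ) % 16 = 11 := by omega
      have hq11 : q % 16 = 11 := by rw [hp11] at hmul; omega
      refine Or.inr ⟨(-(p:ℤ) - 5)/16, (-q - 5)/16, ?_⟩
      have e1 : (3:ℤ) + 16*((-(p:ℤ) - 5)/16) + 2 = -(p:ℤ) := by omega
      have : n = (-(p:ℤ)) * (-q) := by rw [hq]; ring
      rw [this]; congr 1 <;> omega
    · -- p ≡ 13 ≡ -3, q ≡ 13; n = (-p)(-q), both ≡ 3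
      have hp13 : (p:ℤ) % 16 = 13 := by omega
      have hq13 : q % 16 = 13 := by rw [hp13] at hmul; omega
      refine Or.inl ⟨(-(p:ℤ) - 3)/16, (-q - 3)/16, ?_⟩
      have : n = (-(p:ℤ)) * (-q) := by rw [hq]; ring
      rw [this]; congr 1 <;> omega
end

section
/- For any integers a0,...,a3, b0,...,b3, c0,...,c3, d0,...,d3, let F(x,y,z) = f(z)+g(z)x+h(z)y+t(z)xy with f,g,h,t the cubics with these coefficients, let U = f(i)f(−i)−g(i)g(−i)−h(i)h(−i)+t(i)t(−i), V = f(i)h(−i)+f(−i)h(i)−g(i)t(−i)−g(−i)t(i), and A = U²+V². If F(1,1,1) is even, then U is even and 4 divides A². -/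
open Complex

theorem stmt_18 (a0 a1 a2 a3 b0 b1 b2 b3 c0 c1 c2 c3 d0 d1 d2 d3 : ℤ)
    (U V : ℤ) (F : ℤ → ℤ → ℤ → ℤ) (f g h t : ℂ → ℂ)
    (hF : ∀ x y z, F x y z = (a0 + a1*z + a2*z^2 + a3*z^3)
            + (b0 + b1*z + b2*z^2 + b3*z^3)*x
            + (c0 + c1*z + c2*z^2 + c3*z^3)*y
            + (d0 + d1*z + d2*z^2 + d3*z^3)*(x*y))
    (hf : ∀ x, f x = (a0:ℂ) + a1*x + a2*x^2 + a3*x^3)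
    (hg : ∀ x, g x = (b0:ℂ) + b1*x + b2*x^2 + b3*x^3)
    (hh : ∀ x, h x = (c0:ℂ) + c1*x + c2*x^2 + c3*x^3)
    (ht : ∀ x, t x = (d0:ℂ) + d1*x + d2*x^2 + d3*x^3)
    (hU : (U:ℂ) = f I * f (-I) - g I * g (-I) - h I * h (-I) + t I * t (-I))
    (hV : (V:ℂ) = f I * h (-I) + f (-I) * h I - g I * t (-I) - g (-I) * t I)
    (heven : Even (F 1 1 1)) :
    Even U ∧ (4:ℤ) ∣ (U^2 + V^2)^2 := by
  have ev : ∀ p q r s : ℤ, ∀ e : ℂ, ((p:ℂ) + q*e + r*e^2 + s*e^3)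
      = ((p:ℂ) - r) + ((q:ℂ) - s)*e + ((r:ℂ) + s*e)*(e^2+1) := by
    intro p q r s e; ring
  have hI2 : (I:ℂ)^2 + 1 = 0 := by rw [I_sq]; ring
  have hmI2 : (-I:ℂ)^2 + 1 = 0 := by rw [neg_pow, I_sq]; ring
  have hfI : f I = ((a0:ℂ) - a2) + ((a1:ℂ) - a3)*I := by
    rw [hf, ev a0 a1 a2 a3 I, hI2]; ring
  have hfmI : f (-I) = ((a0:ℂ) - a2) - ((a1:ℂ) - a3)*I := by
    rw [hf, ev a0 a1 a2 a3 (-I), hmI2]; ring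
  have hgI : g I = ((b0:ℂ) - b2) + ((b1:ℂ) - b3)*I := by
    rw [hg, ev b0 b1 b2 b3 I, hI2]; ring
  have hgmI : g (-I) = ((b0:ℂ) - b2) - ((b1:ℂ) - b3)*I := by
    rw [hg, ev b0 b1 b2 b3 (-I), hmI2]; ring
  have hhI : h I = ((c0:ℂ) - c2) + ((c1:ℂ) - c3)*I := by
    rw [hh, ev c0 c1 c2 c3 I, hI2]; ring
  have hhmI : h (-I) = ((c0:ℂ) - c2) - ((c1:ℂ) - c3)*I := by
    rw [hh, ev c0 c1 c2 c3 (-I), hmI2]; ring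
  have htI : t I = ((d0:ℂ) - d2) + ((d1:ℂ) - d3)*I := by
    rw [ht, ev d0 d1 d2 d3 I, hI2]; ring
  have htmI : t (-I) = ((d0:ℂ) - d2) - ((d1:ℂ) - d3)*I := by
    rw [ht, ev d0 d1 d2 d3 (-I), hmI2]; ring
  have hUc : (U:ℂ) = (((a0-a2)^2 + (a1-a3)^2 - (b0-b2)^2 - (b1-b3)^2
      - (c0-c2)^2 - (c1-c3)^2 + (d0-d2)^2 + (d1-d3)^2 : ℤ) : ℂ) := by
    rw [hU, hfI, hfmI, hgI, hgmI, hhI, hhmI, htI, htmI]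
    push_cast
    linear_combination ((-((a1:ℂ)-a3)^2 + ((b1:ℂ)-b3)^2 + ((c1:ℂ)-c3)^2 - ((d1:ℂ)-d3)^2)) * I_sq
  have hVc : (V:ℂ) = ((2*((a0-a2)*(c0-c2) + (a1-a3)*(c1-c3)
      - (b0-b2)*(d0-d2) - (b1-b3)*(d1-d3)) : ℤ) : ℂ) := by
    rw [hV, hfI, hfmI, hgI, hgmI, hhI, hhmI, htI, htmI]
    push_cast
    linear_combination ((-2*((a1:ℂ)-a3)*((c1:ℂ)-c3) + 2*((b1:ℂ)-b3)*((d1:ℂ)-d3))) * I_sq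
  have hUz : U = (a0-a2)^2 + (a1-a3)^2 - (b0-b2)^2 - (b1-b3)^2
      - (c0-c2)^2 - (c1-c3)^2 + (d0-d2)^2 + (d1-d3)^2 := by exact_mod_cast hUc
  have hVz : V = 2*((a0-a2)*(c0-c2) + (a1-a3)*(c1-c3)
      - (b0-b2)*(d0-d2) - (b1-b3)*(d1-d3)) := by exact_mod_cast hVc
  have key : ∀ n : ℤ, n^2 % 2 = n % 2 := by
    intro n
    rcases Int.even_or_odd n with ⟨m, hm⟩ | ⟨m, hm⟩ <;> subst hm <;> ring_nf <;> omega
  obtain ⟨k, hk⟩ := heven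
  rw [hF] at hk
  have hS : a0+a1+a2+a3+b0+b1+b2+b3+c0+c1+c2+c3+d0+d1+d2+d3 = k + k := by
    linear_combination hk
  have hEU : Even U := by
    rw [Int.even_iff]
    have e1 := key (a0-a2); have e2 := key (a1-a3); have e3 := key (b0-b2)
    have e4 := key (b1-b3); have e5 := key (c0-c2); have e6 := key (c1-c3)
    have e7 := key (d0-d2); have e8 := key (d1-d3)
    omega
  refine ⟨hEU, ?_⟩
  obtain ⟨u, hu⟩ := hEU
  have h4 : (4:ℤ) ∣ U^2 + V^2 := by
    refine ⟨u^2 + ((a0-a2)*(c0-c2) + (a1-a3)*(c1-c3)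
      - (b0-b2)*(d0-d2) - (b1-b3)*(d1-d3))^2, ?_⟩
    rw [hu, hVz]; ring
  rw [sq]
  exact h4.mul_right _
end
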